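/- The size of the renamed clause set is at most four times the size of the original clause set: for any finite set DL of clauses and any set S of predicate symbols, size(R_S(DL)) ≤ 4 · size(DL), where the size of a clause is the number of atom occurrences in it and the size of a clause set is the sum of the sizes of its clauses. -/

import Mathlib

/-!
Each clause `C` contributes at most four times its size: `C` itself, its renamed copy (which
only moves atoms of `S` between head and body, so is no larger), and at most `|C|` exclusion
clauses of size 2, one per symbol of `S` occurring in `C`. Summing over the clauses gives the
bound, with `≤` because distinct clauses may share renamed or exclusion clauses.
-/

/-- A clause `H ← B`: head and body are finite sets of atoms. -/
structure Clause (α : Type) where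
  head : Finset α
  body : Finset α
deriving DecidableEq

variable {V : Type} [DecidableEq V]

/-- Size of a clause: the number of atom occurrences in it. -/
def sizeC {α : Type} (C : Clause α) : ℕ := C.head.card + C.body.card

/-- Size of a (finite) clause set: the sum of the sizes of its clauses. -/
def sizeSet {α : Type} [DecidableEq α] (N : Finset (Clause α)) : ℕ :=
  ∑ C ∈ N, sizeC C

def embedClause (C : Clause V) : Clause (V ⊕ V) :=
  ⟨C.head.image Sum.inl, C.body.image Sum.inl⟩

/-- The renamed clause `((H \ S) ∪ Neg(B ∩ S)) ← ((B \ S) ∪ Neg(H ∩ S))`. -/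
def renameClause (S : Finset V) (C : Clause V) : Clause (V ⊕ V) :=
  ⟨((C.head \ S).image Sum.inl) ∪ ((C.body ∩ S).image Sum.inr),
   ((C.body \ S).image Sum.inl) ∪ ((C.head ∩ S).image Sum.inr)⟩

/-- The exclusion clause `⊥ ← p ∧ Neg(p)` (size 2). -/
def exclClause (p : V) : Clause (V ⊕ V) :=
  ⟨∅, {Sum.inl p, Sum.inr p}⟩

/-- `R_S(C)`: the clause itself, its renamed version, and one exclusion clause
for each distinct symbol of `S` occurring in `C`. -/
def renameOne (S : Finset V) (C : Clause V) : Finset (Clause (V ⊕ V)) :=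
  {embedClause C, renameClause S C} ∪ ((S ∩ (C.head ∪ C.body)).image exclClause)

/-- `R_S(DL)` for a finite clause set `DL`. -/
def renameSet (S : Finset V) (DL : Finset (Clause V)) : Finset (Clause (V ⊕ V)) :=
  DL.biUnion (renameOne S)

section SizeSet

variable {α : Type} [DecidableEq α]

lemma sizeSet_union_le (A B : Finset (Clause α)) :
    sizeSet (A ∪ B) ≤ sizeSet A + sizeSet B := by
  unfold sizeSet
  rw [← Finset.sum_union_inter]
  exact Nat.le_add_right _ _

lemma sizeSet_pair_le (C D : Clause α) : sizeSet {C, D} ≤ sizeC C + sizeC D := by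
  rw [Finset.insert_eq]
  simpa only [sizeSet, Finset.sum_singleton] using sizeSet_union_le {C} {D}

lemma sizeSet_biUnion_le {ι : Type} [DecidableEq ι] (s : Finset ι)
    (t : ι → Finset (Clause α)) :
    sizeSet (s.biUnion t) ≤ ∑ i ∈ s, sizeSet (t i) := by
  induction s using Finset.induction with
  | empty => simp [sizeSet]
  | insert i s hi ih =>
    rw [Finset.biUnion_insert, Finset.sum_insert hi]
    exact (sizeSet_union_le _ _).trans (Nat.add_le_add_left ih _)

end SizeSet

lemma sizeC_embedClause (C : Clause V) : sizeC (embedClause C) = sizeC C := by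
  simp [sizeC, embedClause, Finset.card_image_of_injective _ Sum.inl_injective]

lemma sizeC_renameClause_le (S : Finset V) (C : Clause V) :
    sizeC (renameClause S C) ≤ sizeC C := by
  simp only [sizeC, renameClause]
  calc _ ≤ ((C.head \ S).image Sum.inl).card + ((C.body ∩ S).image Sum.inr).card
        + (((C.body \ S).image Sum.inl).card + ((C.head ∩ S).image Sum.inr).card) :=
        Nat.add_le_add (Finset.card_union_le _ _) (Finset.card_union_le _ _)
    _ = ((C.head \ S).card + (C.head ∩ S).card) + ((C.body \ S).card + (C.body ∩ S).card) := by
        simp only [Finset.card_image_of_injective _ Sum.inl_injective,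
          Finset.card_image_of_injective _ Sum.inr_injective]
        ring
    _ = C.head.card + C.body.card := by
        rw [Finset.card_sdiff_add_card_inter, Finset.card_sdiff_add_card_inter]

lemma sizeC_exclClause (p : V) : sizeC (exclClause p) = 2 := by
  simp [sizeC, exclClause, Finset.card_pair Sum.inl_ne_inr]

lemma sizeSet_image_exclClause_le (s : Finset V) :
    sizeSet (s.image exclClause) ≤ 2 * s.card :=
  calc sizeSet (s.image exclClause) ≤ ∑ p ∈ s, sizeC (exclClause p) :=
        Finset.sum_image_le_of_nonneg fun _ _ => Nat.zero_le _
    _ = 2 * s.card := by simp [sizeC_exclClause, mul_comm]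

lemma card_inter_atoms_le_sizeC (S : Finset V) (C : Clause V) :
    (S ∩ (C.head ∪ C.body)).card ≤ sizeC C :=
  (Finset.card_le_card Finset.inter_subset_right).trans (Finset.card_union_le _ _)

lemma sizeSet_renameOne_le (S : Finset V) (C : Clause V) :
    sizeSet (renameOne S C) ≤ 4 * sizeC C := by
  have hpair := (sizeSet_pair_le (embedClause C) (renameClause S C)).trans
    (Nat.add_le_add (sizeC_embedClause C).le (sizeC_renameClause_le S C))
  have hexcl := (sizeSet_image_exclClause_le (S ∩ (C.head ∪ C.body))).trans
    (Nat.mul_le_mul_left 2 (card_inter_atoms_le_sizeC S C))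
  have := sizeSet_union_le {embedClause C, renameClause S C}
    ((S ∩ (C.head ∪ C.body)).image exclClause)
  rw [renameOne]
  omega

/-- `size(R_S(DL)) ≤ 4 · size(DL)`. -/
theorem sizeSet_renameSet_le (DL : Finset (Clause V)) (S : Finset V) :
    sizeSet (renameSet S DL) ≤ 4 * sizeSet DL := by
  refine (sizeSet_biUnion_le DL (renameOne S)).trans ?_
  rw [sizeSet, Finset.mul_sum]
  exact Finset.sum_le_sum fun C _ => sizeSet_renameOne_le S C
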